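/- For every t>0 and S>0, the delta of the Black–Scholes formula is ∂_S 𝓑𝓢(t,S) = α e^{−(r−r_R)t} Φ(αζ₁), where ∂_S denotes the derivative with respect to the asset variable S. -/

import Mathlib

/-- Standard normal cumulative distribution function. -/
noncomputable def Phi (x : ℝ) : ℝ :=
  (Real.sqrt (2 * Real.pi))⁻¹ * ∫ u in Set.Iic x, Real.exp (-u ^ 2 / 2)

/-- `ζ₁ = (log(S/K) + (r_R + σ²/2)t)/(σ√t)`. -/
noncomputable def zeta1 (σ K r_R t S : ℝ) : ℝ :=
  (Real.log (S / K) + (r_R + σ ^ 2 / 2) * t) / (σ * Real.sqrt t)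

/-- `ζ₂ = ζ₁ − σ√t`. -/
noncomputable def zeta2 (σ K r_R t S : ℝ) : ℝ :=
  zeta1 σ K r_R t S - σ * Real.sqrt t

/-- The Black–Scholes formula
`𝓑𝓢(t,S) = α S e^{−(r−r_R)t} Φ(αζ₁) − α K e^{−rt} Φ(αζ₂)` (t = time to maturity). -/
noncomputable def BS (σ K r r_R α t S : ℝ) : ℝ :=
  α * S * Real.exp (-(r - r_R) * t) * Phi (α * zeta1 σ K r_R t S)
    - α * K * Real.exp (-r * t) * Phi (α * zeta2 σ K r_R t S)

/-
Differentiating `s ↦ α s e^{-(r-r_R)t} Φ(αζ₁(s)) - α K e^{-rt} Φ(αζ₂(s))` by the product and chain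
rules gives `α e^{-(r-r_R)t} Φ(αζ₁)` plus `α² ∂_S ζ₁ (S e^{-(r-r_R)t} φ(ζ₁) - K e^{-rt} φ(ζ₂))`,
using `∂_S ζ₁ = ∂_S ζ₂` and the evenness of the normal density `φ`. The bracket vanishes: since
`ζ₂ = ζ₁ - σ√t`, we have `φ(ζ₂) = φ(ζ₁) e^{σ√t ζ₁ - σ²t/2} = φ(ζ₁) (S/K) e^{r_R t}`.
-/

open Real MeasureTheory

theorem hasDerivAt_integral_Iic {E : Type*} [NormedAddCommGroup E] [NormedSpace ℝ E]
    [CompleteSpace E] {f : ℝ → E} (hf : Integrable f) {x : ℝ} (hfx : ContinuousAt f x) :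
    HasDerivAt (fun y => ∫ u in Set.Iic y, f u) (f x) x := by
  have hsplit : (fun y => ∫ u in Set.Iic y, f u)
      = fun y => (∫ u in Set.Iic 0, f u) + ∫ u in (0 : ℝ)..y, f u := by
    funext y
    rw [← intervalIntegral.integral_Iic_sub_Iic hf.integrableOn hf.integrableOn, add_sub_cancel]
  rw [hsplit]
  exact (intervalIntegral.integral_hasDerivAt_right hf.intervalIntegrable
    hf.aestronglyMeasurable.stronglyMeasurableAtFilter hfx).const_add _

noncomputable def phi (x : ℝ) : ℝ :=
  (√(2 * π))⁻¹ * exp (-x ^ 2 / 2)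

theorem phi_neg (x : ℝ) : phi (-x) = phi x := by
  simp only [phi, neg_sq]

theorem hasDerivAt_Phi (x : ℝ) : HasDerivAt Phi (phi x) x := by
  have hgauss : Integrable fun u : ℝ => exp (-u ^ 2 / 2) := by
    simpa [div_eq_inv_mul] using integrable_exp_neg_mul_sq (b := 1 / 2) (by norm_num)
  exact (hasDerivAt_integral_Iic hgauss (by fun_prop)).const_mul _

theorem hasDerivAt_zeta1 (σ r_R t : ℝ) {K S : ℝ} (hK : K ≠ 0) (hS : S ≠ 0) :
    HasDerivAt (zeta1 σ K r_R t) (S⁻¹ / (σ * √t)) S := by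
  have hlog : HasDerivAt (fun s => log (s / K)) S⁻¹ S := by
    convert ((hasDerivAt_id' S).div_const K).log (div_ne_zero hS hK) using 1
    field_simp
  exact (hlog.add_const _).div_const _

theorem hasDerivAt_zeta2 (σ r_R t : ℝ) {K S : ℝ} (hK : K ≠ 0) (hS : S ≠ 0) :
    HasDerivAt (zeta2 σ K r_R t) (S⁻¹ / (σ * √t)) S :=
  (hasDerivAt_zeta1 σ r_R t hK hS).sub_const _

theorem hasDerivAt_BS (σ r r_R α t : ℝ) {K S : ℝ} (hK : K ≠ 0) (hS : S ≠ 0) :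
    HasDerivAt (BS σ K r r_R α t)
      (α * exp (-(r - r_R) * t) * Phi (α * zeta1 σ K r_R t S)
        + α ^ 2 * (S⁻¹ / (σ * √t))
          * (S * exp (-(r - r_R) * t) * phi (α * zeta1 σ K r_R t S)
            - K * exp (-r * t) * phi (α * zeta2 σ K r_R t S))) S := by
  have hΦ₁ := (hasDerivAt_Phi _).comp S ((hasDerivAt_zeta1 σ r_R t hK hS).const_mul α)
  have hΦ₂ := (hasDerivAt_Phi _).comp S ((hasDerivAt_zeta2 σ r_R t hK hS).const_mul α)
  have hlin : HasDerivAt (fun s : ℝ => α * s * exp (-(r - r_R) * t))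
      (α * exp (-(r - r_R) * t)) S := by
    simpa using ((hasDerivAt_id S).const_mul α).mul_const (exp (-(r - r_R) * t))
  refine ((hlin.mul hΦ₁).sub (hΦ₂.const_mul (α * K * exp (-r * t)))).congr_deriv ?_
  simp only [Function.comp_apply]
  ring

theorem spot_mul_phi_zeta1_eq_strike_mul_phi_zeta2 {σ K t : ℝ} (r r_R : ℝ) {S : ℝ} (hσ : σ ≠ 0)
    (hK : 0 < K) (ht : 0 < t) (hS : 0 < S) :
    S * exp (-(r - r_R) * t) * phi (zeta1 σ K r_R t S)
      = K * exp (-r * t) * phi (zeta2 σ K r_R t S) := by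
  have hvol : σ * √t ≠ 0 := mul_ne_zero hσ (sqrt_pos.mpr ht).ne'
  have hζ : σ * √t * zeta1 σ K r_R t S = log (S / K) + (r_R + σ ^ 2 / 2) * t := by
    unfold zeta1; field_simp
  have hvol_sq : (σ * √t) ^ 2 = σ ^ 2 * t := by rw [mul_pow, sq_sqrt ht.le]
  have hφ : exp (-zeta2 σ K r_R t S ^ 2 / 2)
      = S / K * exp (r_R * t) * exp (-zeta1 σ K r_R t S ^ 2 / 2) := by
    rw [← exp_log (div_pos hS hK), ← exp_add, ← exp_add]
    congr 1
    unfold zeta2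
    linear_combination hζ - hvol_sq / 2
  unfold phi
  rw [hφ, neg_mul, sub_mul, exp_neg, exp_sub, neg_mul, exp_neg]
  field_simp

/-- The delta of the Black–Scholes formula:
`∂_S 𝓑𝓢(t,S) = α e^{−(r−r_R)t} Φ(αζ₁)`. -/
theorem BS_delta
    (σ K r r_R α : ℝ) (hσ : 0 < σ) (hK : 0 < K) (hα : α = 1 ∨ α = -1) :
    ∀ t > (0 : ℝ), ∀ S > (0 : ℝ),
      deriv (fun s => BS σ K r r_R α t s) S
        = α * Real.exp (-(r - r_R) * t) * Phi (α * zeta1 σ K r_R t S) := by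
  intro t ht S hS
  have hphi_mul : ∀ x, phi (α * x) = phi x := by
    rcases hα with rfl | rfl <;> simp [phi_neg]
  rw [(hasDerivAt_BS σ r r_R α t hK.ne' hS.ne').deriv, hphi_mul, hphi_mul,
    spot_mul_phi_zeta1_eq_strike_mul_phi_zeta2 r r_R hσ.ne' hK ht hS, sub_self, mul_zero, add_zero]
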